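/- arXiv:2403.19855 — 5 statements merged into one kernel-verified Lean document; each statement's English description precedes it below -/
import Mathlib

section
/- If V is a linear subspace of the space of E-valued sequences (for a normed space E) that is closed under spreading (i.e., for every (a_j) in V and every strictly increasing sequence (j_i) of natural numbers, the sequence placing a_i at position j_i and 0 elsewhere again belongs to V), and V contains a nonzero element, then V is infinite dimensional. -/
open Classical in
/-- The spreading of a sequence `a` along a strictly increasing map `j`:
the value `a i` is placed at position `j i`, and positions outside the range of `j` are `0`. -/
noncomputable def Sp {E : Type*} [Zero E] (a : ℕ → E) (j : ℕ → ℕ) : ℕ → E :=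
  fun k => if h : ∃ i, j i = k then a h.choose else 0

lemma Sp_apply_eq {E : Type*} [Zero E] (a : ℕ → E) {j : ℕ → ℕ} (hj : StrictMono j) (i : ℕ) :
    Sp a j (j i) = a i := by
  have h : ∃ t, j t = j i := ⟨i, rfl⟩
  simp only [Sp, dif_pos h]
  congr 1
  exact hj.injective h.choose_spec

lemma Sp_apply_ne {E : Type*} [Zero E] (a : ℕ → E) (j : ℕ → ℕ) {k : ℕ}
    (h : ¬ ∃ i, j i = k) : Sp a j k = 0 := by
  simp only [Sp, dif_neg h]

/-- If a subspace `V` of `E`-valued sequences is closed under spreading and contains a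
nonzero element, then `V` is infinite dimensional. -/
theorem spreading_closed_infinite_dimensional
    {K E : Type*} [NontriviallyNormedField K] [NormedAddCommGroup E] [NormedSpace K E]
    (V : Submodule K (ℕ → E))
    (hspread : ∀ a ∈ V, ∀ j : ℕ → ℕ, StrictMono j → Sp a j ∈ V)
    (hne : ∃ v ∈ V, v ≠ 0) :
    ¬ FiniteDimensional K V := by
  classical
  obtain ⟨v, hvV, hv0⟩ := hne
  have hex : ∃ n, v n ≠ 0 := by
    by_contra h
    push_neg at h
    exact hv0 (funext h)
  set n0 := Nat.find hex with hn0def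
  have hn0 : v n0 ≠ 0 := Nat.find_spec hex
  have hlt : ∀ t < n0, v t = 0 := fun t ht => by
    by_contra h; exact absurd (Nat.find_le h) (not_le.mpr ht)
  -- the shifted sequences
  set w : ℕ → (ℕ → E) := fun m => Sp v (fun t => t + m) with hwdef
  have hmono : ∀ m, StrictMono (fun t => t + m) := fun m a b hab => Nat.add_lt_add_right hab m
  have hwV : ∀ m, w m ∈ V := fun m => hspread v hvV _ (hmono m)
  have hw_eq : ∀ m k, w m (k + m) = v k := fun m k => Sp_apply_eq v (hmono m) k
  have hw_zero : ∀ m k, k < m → w m k = 0 := by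
    intro m k hk
    apply Sp_apply_ne
    rintro ⟨t, ht⟩
    omega
  -- evaluate w i at n0 + m
  have heval : ∀ i m, m < i → w i (n0 + m) = 0 := by
    intro i m hmi
    rcases lt_or_ge (n0 + m) i with h | h
    · exact hw_zero i _ h
    · have : n0 + m = (n0 + m - i) + i := by omega
      rw [this, hw_eq]
      exact hlt _ (by omega)
  have heval_eq : ∀ m, w m (n0 + m) = v n0 := fun m => hw_eq m n0
  -- linear independence
  have hli : LinearIndependent K w := by
    rw [linearIndependent_iff']
    intro s
    induction s using Finset.strongInduction with
    | _ s ih =>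
      intro g hsum i hi
      have hsne : s.Nonempty := ⟨i, hi⟩
      set m := s.min' hsne with hmdef
      have hm : m ∈ s := s.min'_mem hsne
      have hgm : g m = 0 := by
        have h1 := congrFun hsum (n0 + m)
        rw [Finset.sum_apply] at h1
        have h2 : ∑ j ∈ s, (g j • w j) (n0 + m) = g m • v n0 := by
          rw [Finset.sum_eq_single m]
          · rw [Pi.smul_apply, heval_eq]
          · intro b hb hbm
            have : m < b := lt_of_le_of_ne (s.min'_le b hb) (Ne.symm hbm)
            rw [Pi.smul_apply, heval b m this, smul_zero]
          · intro h; exact absurd hm h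
        rw [h2] at h1
        simp only [Pi.zero_apply] at h1
        rcases smul_eq_zero.mp h1 with h | h
        · exact h
        · exact absurd h hn0
      by_cases him : i = m
      · exact him ▸ hgm
      · have hsub : s.erase m ⊂ s := Finset.erase_ssubset hm
        apply ih (s.erase m) hsub g _ i (Finset.mem_erase.2 ⟨him, hi⟩)
        rw [← Finset.add_sum_erase _ _ hm] at hsum
        rwa [hgm, zero_smul, zero_add] at hsum
  -- lift to V
  intro hfd
  have hliV : LinearIndependent K (fun m => (⟨w m, hwV m⟩ : V)) := by
    apply LinearIndependent.of_comp V.subtype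
    exact hli
  exact Module.Finite.not_linearIndependent_of_infinite _ hliV
end

section
/- Let V be a spreading-closed subspace of E-valued sequences containing a nonzero sequence v, and let (N_k) be a partition of ℕ into infinitely many pairwise disjoint infinite subsets. For each k, let w_k be the spreading of v with respect to N_k. Then the family {w_k : k ∈ ℕ} is linearly independent. -/
open Classical in
/-- The spreading of a sequence `v` with respect to an infinite subset
`N = {n₁ < n₂ < ⋯}` of `ℕ`: the resulting sequence has value `v i` at position
`n_{i+1}` (the element of `N` with exactly `i` predecessors in `N`) and `0` outside `N`. -/
noncomputable def SpSet {E : Type*} [Zero E] (v : ℕ → E) (N : Set ℕ) : ℕ → E :=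
  fun k => if k ∈ N then v (Nat.count (· ∈ N) k) else 0

open Classical in
/-- If `V` is a spreading-closed subspace of `E`-valued sequences containing a nonzero
sequence `v`, and `(N k)` is a partition of `ℕ` into pairwise disjoint infinite subsets,
then the spreadings `w_k = Sp(v, N k)` form a linearly independent family. -/
theorem spreadings_linearIndependent
    {K E : Type*} [Field K] [AddCommGroup E] [Module K E]
    (V : Submodule K (ℕ → E))
    (hspread : ∀ v ∈ V, ∀ N : Set ℕ, N.Infinite → SpSet v N ∈ V)
    (v : ℕ → E) (hv : v ∈ V) (hv0 : v ≠ 0)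
    (N : ℕ → Set ℕ) (hinf : ∀ k, (N k).Infinite)
    (hdisj : Pairwise (Function.onFun Disjoint N))
    (hcover : ⋃ k, N k = Set.univ) :
    LinearIndependent K (fun k : ℕ => SpSet v (N k)) := by
  obtain ⟨i, hi⟩ : ∃ i, v i ≠ 0 := by
    by_contra h
    push_neg at h
    exact hv0 (funext h)
  rw [linearIndependent_iff']
  intro s g hg k hk
  have hinfk : {m | m ∈ N k}.Infinite := hinf k
  set n := Nat.nth (· ∈ N k) i with hn
  have hmem : n ∈ N k := Nat.nth_mem_of_infinite hinfk i
  have hcount : Nat.count (· ∈ N k) n = i := Nat.count_nth_of_infinite hinfk i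
  have hval : ∀ j, j ≠ k → SpSet v (N j) n = 0 := by
    intro j hj
    have : n ∉ N j := fun hnj =>
      (Set.disjoint_left.mp (hdisj hj)) hnj hmem
    simp [SpSet, this]
  have := congrFun hg n
  simp only [Finset.sum_apply, Pi.smul_apply, Pi.zero_apply] at this
  rw [Finset.sum_eq_single k] at this
  · have hvk : SpSet v (N k) n = v i := by
      simp [SpSet, hmem, hcount]
    rw [hvk] at this
    rcases smul_eq_zero.mp this with h | h
    · exact h
    · exact absurd h hi
  · intro j hj hjk
    rw [hval j hjk, smul_zero]
  · intro h; exact absurd hk h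
end

section
/- Let Ω be a nonempty set, V a Banach space of E-valued sequences that is spreading-closed with norm non-increasing under spreadings, and A a Banach space of functions from Ω to V whose topology contains the pointwise convergence topology and which is stable under postcomposition with bounded linear operators u : V → V with ‖u ∘ g‖_A ≤ ‖u‖·‖g‖_A. If A contains a nonzero non-injective function f, then there is a closed subspace X of A with f ∈ X, X infinite dimensional, and every element of X non-injective. -/
open Filter

open Classical in
lemma SpSet_add {E : Type*} [AddCommGroup E] (v w : ℕ → E) (N : Set ℕ) :
    SpSet (v + w) N = SpSet v N + SpSet w N := by
  funext k
  by_cases h : k ∈ N <;> simp [SpSet, h]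

open Classical in
lemma SpSet_smul {𝕜 E : Type*} [AddCommGroup E] [DivisionRing 𝕜] [Module 𝕜 E]
    (c : 𝕜) (v : ℕ → E) (N : Set ℕ) :
    SpSet (c • v) N = c • SpSet v N := by
  funext k
  by_cases h : k ∈ N <;> simp [SpSet, h]

lemma count_le_self (p : ℕ → Prop) [DecidablePred p] (k : ℕ) : Nat.count p k ≤ k := by
  rw [Nat.count_eq_card_filter_range]
  calc ((Finset.range k).filter p).card ≤ (Finset.range k).card :=
        Finset.card_filter_le _ _
    _ = k := Finset.card_range k

lemma count_at (n₀ j : ℕ) (p : ℕ → Prop) [DecidablePred p]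
    (hp : ∀ k, p k ↔ (k < n₀ ∨ n₀ + j ≤ k)) :
    Nat.count p (n₀ + j) = n₀ := by
  rw [Nat.count_eq_card_filter_range]
  have h : ((Finset.range (n₀ + j)).filter p) = Finset.range n₀ := by
    ext i
    simp only [Finset.mem_filter, Finset.mem_range, hp]
    omega
  rw [h, Finset.card_range]

/-- Main theorem: let `V` be a Banach space of `E`-valued sequences (realized via an
injective linear map `ιV`) that is spreading-closed with norm non-increasing under
spreadings, and let `A` be a Banach space of functions from a nonempty set `Ω` to `V`
(realized via an injective linear map `ιA`) whose topology contains the topology of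
pointwise convergence and which is stable under postcomposition with bounded linear
operators `u : V → V`, with `‖u ∘ g‖ ≤ ‖u‖·‖g‖`. If `A` contains a nonzero non-injective
function `f`, then there is a closed infinite-dimensional subspace `X` of `A` containing
`f` all of whose elements are non-injective. -/
theorem noninjective_pointwise_spaceable
    {𝕜 E V A Ω : Type*} [NontriviallyNormedField 𝕜]
    [AddCommGroup E] [Module 𝕜 E]
    [NormedAddCommGroup V] [NormedSpace 𝕜 V] [CompleteSpace V]
    [NormedAddCommGroup A] [NormedSpace 𝕜 A] [CompleteSpace A]
    [Nonempty Ω]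
    (ιV : V →ₗ[𝕜] (ℕ → E)) (hιV : Function.Injective ιV)
    (hspread : ∀ (x : V) (N : Set ℕ), N.Infinite →
      ∃ y : V, ιV y = SpSet (ιV x) N ∧ ‖y‖ ≤ ‖x‖)
    (ιA : A →ₗ[𝕜] (Ω → V)) (hιA : Function.Injective ιA)
    (hpt : ∀ (g : ℕ → A) (g₀ : A), Tendsto g atTop (nhds g₀) →
      ∀ w : Ω, Tendsto (fun k => ιA (g k) w) atTop (nhds (ιA g₀ w)))
    (hstab : ∀ (u : V →L[𝕜] V) (g : A),
      ∃ h : A, (∀ w : Ω, ιA h w = u (ιA g w)) ∧ ‖h‖ ≤ ‖u‖ * ‖g‖)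
    (f : A) (hf0 : f ≠ 0) (hfni : ¬ Function.Injective (ιA f)) :
    ∃ X : Submodule 𝕜 A, IsClosed (X : Set A) ∧ ¬ Module.Finite 𝕜 X ∧
      f ∈ X ∧ ∀ g ∈ X, ¬ Function.Injective (ιA g) := by
  classical
  rw [Function.Injective] at hfni
  push_neg at hfni
  obtain ⟨w₀, t₀, hft, hwt⟩ := hfni
  set L : A →ₗ[𝕜] V :=
    ((LinearMap.proj w₀ : (Ω → V) →ₗ[𝕜] V).comp ιA)
      - ((LinearMap.proj t₀ : (Ω → V) →ₗ[𝕜] V).comp ιA) with hLdef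
  have hLval : ∀ g : A, L g = ιA g w₀ - ιA g t₀ := fun g => rfl
  have hmem : ∀ g : A, g ∈ LinearMap.ker L ↔ ιA g w₀ = ιA g t₀ := by
    intro g
    rw [LinearMap.mem_ker, hLval, sub_eq_zero]
  refine ⟨LinearMap.ker L, ?_, ?_, (hmem f).mpr hft, ?_⟩
  · -- closedness
    apply IsSeqClosed.isClosed
    intro x p hx hxp
    have h1 := hpt x p hxp w₀
    have h2 := hpt x p hxp t₀
    have heq : (fun k => ιA (x k) w₀) = fun k => ιA (x k) t₀ := by
      funext k
      exact (hmem _).mp (hx k)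
    rw [heq] at h1
    exact (hmem p).mpr (tendsto_nhds_unique h1 h2)
  · -- infinite dimensional
    intro hFin
    haveI := hFin
    -- a point where f is nonzero
    have hfw : ∃ w : Ω, ιA f w ≠ 0 := by
      by_contra h
      push_neg at h
      apply hf0
      apply hιA
      funext ω
      simp [h ω]
    obtain ⟨w, hw⟩ := hfw
    have hvn : ∃ n, ιV (ιA f w) n ≠ 0 := by
      by_contra h
      push_neg at h
      apply hw
      apply hιV
      funext n
      simp [h n]
    set v : ℕ → E := ιV (ιA f w) with hv
    set n₀ := Nat.find hvn with hn₀def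
    have hn₀ : v n₀ ≠ 0 := Nat.find_spec hvn
    have hn₀min : ∀ m < n₀, v m = 0 := fun m hm => not_not.mp (Nat.find_min hvn hm)
    set N : ℕ → Set ℕ := fun j => {k | k < n₀ ∨ n₀ + j ≤ k} with hNdef
    have hNinf : ∀ j, (N j).Infinite := by
      intro j
      apply Set.Infinite.mono (s := Set.Ici (n₀ + j)) (fun k hk => Or.inr hk)
      exact Set.Ici_infinite _
    -- the spreading operators
    have huex : ∀ j, ∃ u : V →L[𝕜] V, ∀ x : V, ιV (u x) = SpSet (ιV x) (N j) := by
      intro j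
      have hex : ∀ x : V, ∃ y : V, ιV y = SpSet (ιV x) (N j) ∧ ‖y‖ ≤ ‖x‖ :=
        fun x => hspread x (N j) (hNinf j)
      choose T hT hTle using hex
      have hadd : ∀ x y, T (x + y) = T x + T y := by
        intro x y
        apply hιV
        rw [hT, map_add, map_add, SpSet_add, hT, hT]
      have hsmul : ∀ (c : 𝕜) (x : V), T (c • x) = c • T x := by
        intro c x
        apply hιV
        rw [hT, map_smul, map_smul, SpSet_smul, hT]
      let Tl : V →ₗ[𝕜] V :=
        { toFun := T, map_add' := hadd, map_smul' := hsmul }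
      exact ⟨Tl.mkContinuous 1 (fun x => by rw [one_mul]; exact hTle x), hT⟩
    choose u hu using huex
    -- the elements h j
    have hhex : ∀ j, ∃ h : A, ∀ ω : Ω, ιA h ω = u j (ιA f ω) :=
      fun j => ⟨(hstab (u j) f).choose, (hstab (u j) f).choose_spec.1⟩
    choose h hhspec using hhex
    have hmemh : ∀ j, h j ∈ LinearMap.ker L := by
      intro j
      rw [hmem, hhspec, hhspec, hft]
    -- the map reading off values
    let Φ : A →ₗ[𝕜] (ℕ → E) :=
      ιV.comp ((LinearMap.proj w : (Ω → V) →ₗ[𝕜] V).comp ιA)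
    have hΦh : ∀ j, Φ (h j) = SpSet v (N j) := by
      intro j
      show ιV (ιA (h j) w) = _
      rw [hhspec, hu]
    -- key values of the spreads
    have key0 : ∀ j k, k < n₀ + j → SpSet v (N j) k = 0 := by
      intro j k hk
      by_cases hkN : k ∈ N j
      · have hkn : k < n₀ := by
          rcases hkN with h' | h'
          · exact h'
          · omega
        simp only [SpSet, if_pos hkN]
        apply hn₀min
        exact lt_of_le_of_lt
          (@count_le_self (· ∈ N j) (fun a => Classical.propDecidable _) k) hkn
      · simp only [SpSet, if_neg hkN]
    have key1 : ∀ j, SpSet v (N j) (n₀ + j) = v n₀ := by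
      intro j
      have hmemN : (n₀ + j) ∈ N j := Or.inr le_rfl
      simp only [SpSet, if_pos hmemN]
      congr 1
      exact @count_at n₀ j (· ∈ N j) (fun a => Classical.propDecidable _)
        (fun k => Iff.rfl)
    -- linear independence of the spreads
    have hli : LinearIndependent 𝕜 (fun j => SpSet v (N j)) := by
      rw [linearIndependent_iff']
      intro t g hsum i hi
      revert hi
      induction i using Nat.strong_induction_on with
      | _ i ih =>
        intro hi
        have hval := congrFun hsum (n₀ + i)
        rw [Finset.sum_apply] at hval
        simp only [Pi.zero_apply] at hval
        rw [Finset.sum_eq_single i ?_ ?_] at hval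
        · rw [Pi.smul_apply, key1 i] at hval
          by_contra hgi
          apply hn₀
          have h2 := congrArg (fun z => (g i)⁻¹ • z) hval
          simpa [smul_smul, inv_mul_cancel₀ hgi] using h2
        · intro j hj hji
          rcases lt_or_gt_of_ne hji with hlt | hgt
          · simp [ih j hlt hj]
          · simp [key0 j (n₀ + i) (by omega)]
        · intro h'
          exact absurd hi h'
    -- lift to h and to the kernel
    have hlih : LinearIndependent 𝕜 h := by
      apply LinearIndependent.of_comp Φ
      have heq : ⇑Φ ∘ h = fun j => SpSet v (N j) := funext hΦh
      rw [heq]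
      exact hli
    have hliX : LinearIndependent 𝕜
        (fun j => (⟨h j, hmemh j⟩ : LinearMap.ker L)) := by
      apply LinearIndependent.of_comp (LinearMap.ker L).subtype
      exact hlih
    have h1 := hliX.cardinal_lift_le_rank
    have h2 := Module.rank_lt_aleph0 𝕜 (LinearMap.ker L)
    have h3 : (Cardinal.aleph0 : Cardinal) ≤ Module.rank 𝕜 (LinearMap.ker L) := by
      simpa using h1
    exact absurd h3 (not_le.mpr h2)
  · intro g hg hinj
    exact hwt (hinj ((hmem g).mp hg))
end

section
/- Under the hypotheses of the main theorem (A a stable function space of maps Ω → V, V spreading-closed), if f ∈ A is nonzero and non-injective with f(w₀) = f(t₀), w₀ ≠ t₀, and N₁, N₂, ... are pairwise disjoint infinite subsets of ℕ all avoiding an index j₀ with (f(z))_{j₀} ≠ 0 for some z ∈ Ω, then the functions f_k := u_{N_k} ∘ f satisfy: each f_k ∈ A, each f_k is non-injective (f_k(w₀) = f_k(t₀)), ‖f_k‖_A ≤ ‖f‖_A, and the set {f, f₁, f₂, ...} is linearly independent. -/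
/-- Under the hypotheses of the main theorem, if `f ∈ A` is nonzero and non-injective
with `f w₀ = f t₀`, `w₀ ≠ t₀`, and `N₁, N₂, …` are pairwise disjoint infinite subsets of
`ℕ` all avoiding an index `j₀` with `(f z)_{j₀} ≠ 0`, then the functions `f_k = u_{N_k} ∘ f`
are in `A`, satisfy `f_k w₀ = f_k t₀` (so each `f_k` is non-injective), `‖f_k‖ ≤ ‖f‖`, and
the family `{f, f₁, f₂, …}` is linearly independent. -/
theorem spreadings_of_mother_function
    {𝕜 E V A Ω : Type*} [NontriviallyNormedField 𝕜]
    [AddCommGroup E] [Module 𝕜 E]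
    [NormedAddCommGroup V] [NormedSpace 𝕜 V]
    [NormedAddCommGroup A] [NormedSpace 𝕜 A]
    (ιV : V →ₗ[𝕜] (ℕ → E)) (hιV : Function.Injective ιV)
    (huN : ∀ N : Set ℕ, N.Infinite →
      ∃ u : V →L[𝕜] V, ‖u‖ ≤ 1 ∧ ∀ x : V, ιV (u x) = SpSet (ιV x) N)
    (ιA : A →ₗ[𝕜] (Ω → V)) (hιA : Function.Injective ιA)
    (hstab : ∀ (u : V →L[𝕜] V) (g : A),
      ∃ h : A, (∀ w : Ω, ιA h w = u (ιA g w)) ∧ ‖h‖ ≤ ‖u‖ * ‖g‖)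
    (f : A) (hf0 : f ≠ 0)
    (w₀ t₀ : Ω) (hwt : w₀ ≠ t₀) (heq : ιA f w₀ = ιA f t₀)
    (z : Ω) (j₀ : ℕ) (hz : ιV (ιA f z) j₀ ≠ 0)
    (N : ℕ → Set ℕ) (hNinf : ∀ k, (N k).Infinite)
    (hNdisj : Pairwise (Function.onFun Disjoint N))
    (hNj₀ : ∀ k, j₀ ∉ N k)
    (fk : ℕ → A)
    (hfk : ∀ (k : ℕ) (w : Ω), ιV (ιA (fk k) w) = SpSet (ιV (ιA f w)) (N k)) :
    (∀ k, ιA (fk k) w₀ = ιA (fk k) t₀) ∧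
      (∀ k, ‖fk k‖ ≤ ‖f‖) ∧
      LinearIndependent 𝕜 (fun o : Option ℕ => o.elim f fk) := by
  classical
  -- evaluation linear map
  let ψ : Ω → ℕ → A →ₗ[𝕜] E := fun w j =>
    (LinearMap.proj j).comp (ιV.comp ((LinearMap.proj w).comp ιA))
  have hψ : ∀ w j a, ψ w j a = ιV (ιA a w) j := fun _ _ _ => rfl
  refine ⟨fun k => ?_, fun k => ?_, ?_⟩
  · apply hιV
    rw [hfk, hfk, heq]
  · obtain ⟨u, hu1, hu2⟩ := huN (N k) (hNinf k)
    obtain ⟨h, hh1, hh2⟩ := hstab u f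
    have hhk : h = fk k := by
      apply hιA; funext w; apply hιV
      rw [hh1, hu2, hfk]
    calc ‖fk k‖ = ‖h‖ := by rw [hhk]
      _ ≤ ‖u‖ * ‖f‖ := hh2
      _ ≤ 1 * ‖f‖ := mul_le_mul_of_nonneg_right hu1 (norm_nonneg f)
      _ = ‖f‖ := one_mul _
  · rw [linearIndependent_iff']
    intro s g hg
    have hsum : ∀ w j, ∑ i ∈ s, g i • ψ w j ((fun o : Option ℕ => o.elim f fk) i) = 0 := by
      intro w j
      have := congrArg (ψ w j) hg
      rw [map_sum, map_zero] at this
      simpa [map_smul] using this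
    -- each fk k vanishes at (z, j₀)
    have hfkz : ∀ k, ψ z j₀ (fk k) = 0 := by
      intro k
      rw [hψ, hfk]
      simp [SpSet, hNj₀ k]
    have hnone : none ∈ s → g none = 0 := by
      intro hns
      have h0 := hsum z j₀
      rw [Finset.sum_eq_single_of_mem none hns (fun i his hne => ?_)] at h0
      · rcases smul_eq_zero.mp h0 with h | h
        · exact h
        · exact absurd h hz
      · rcases i with _ | k
        · exact absurd rfl hne
        · simp [hfkz k]
    intro i hi
    rcases i with _ | k
    · exact hnone hi
    · -- evaluate at (z, nth (N k) j₀)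
      set j : ℕ := Nat.nth (· ∈ N k) j₀ with hj
      have hjmem : j ∈ N k := Nat.nth_mem_of_infinite (hNinf k) j₀
      have hjcount : Nat.count (· ∈ N k) j = j₀ := Nat.count_nth_of_infinite (p := (· ∈ N k)) (hNinf k) j₀
      have hval : ψ z j (fk k) = ιV (ιA f z) j₀ := by
        rw [hψ, hfk]
        simp [SpSet, hjmem, hjcount]
      have h0 := hsum z j
      rw [Finset.sum_eq_single_of_mem (some k) hi (fun i his hne => ?_)] at h0
      · simp only [Option.elim] at h0
        rcases smul_eq_zero.mp h0 with h | h
        · exact h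
        · rw [hval] at h; exact absurd h hz
      · rcases i with _ | k'
        · simp [hnone his]
        · have hk' : k' ≠ k := fun h => hne (by rw [h])
          have hjnot : j ∉ N k' := fun hmem =>
            Set.disjoint_left.mp (hNdisj hk') hmem hjmem
          have : ψ z j (fk k') = 0 := by
            rw [hψ, hfk]; simp [SpSet, hjnot]
          simp [this]
end

section
/- Let E be a Banach space of dimension greater than 1 and V a Banach space of sequences over a linear space W that is spreading-closed with norm non-increasing under spreadings. Then the set of non-injective bounded linear operators from E to V is pointwise spaceable in L(E; V): for every non-injective T ∈ L(E; V) there is a closed infinite-dimensional subspace of L(E; V) containing T and consisting entirely of non-injective operators. -/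
/-- A nontrivial spreading-closed sequence space is infinite-dimensional. -/
theorem spreadingClosed_not_finite {𝕜 W V : Type*} [RCLike 𝕜] [AddCommGroup W] [Module 𝕜 W]
    [NormedAddCommGroup V] [NormedSpace 𝕜 V] [Nontrivial V]
    (ιV : V →ₗ[𝕜] (ℕ → W)) (hιV : Function.Injective ιV)
    (hspread : ∀ (x : V) (N : Set ℕ), N.Infinite →
      ∃ y : V, ιV y = SpSet (ιV x) N ∧ ‖y‖ ≤ ‖x‖) :
    ¬ Module.Finite 𝕜 V := by
  classical
  obtain ⟨x, hx⟩ := exists_ne (0 : V)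
  have hvne : ∃ k, ιV x k ≠ 0 := by
    by_contra h
    push_neg at h
    refine hx (hιV ?_)
    rw [map_zero]
    funext k
    exact h k
  set v : ℕ → W := ιV x with hv
  set k₀ := Nat.find hvne with hk₀def
  have hk₀ : v k₀ ≠ 0 := Nat.find_spec hvne
  have hk₀min : ∀ m < k₀, v m = 0 := fun m hm => not_not.mp (Nat.find_min hvne hm)
  set N : ℕ → Set ℕ := fun i => {n | n < k₀ ∨ k₀ + i ≤ n} with hN
  have hNinf : ∀ i, (N i).Infinite := fun i =>
    Set.Infinite.mono (fun n hn => Or.inr hn) (Set.Ici_infinite (k₀ + i))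
  choose y hy _ using fun i => hspread x (N i) (hNinf i)
  have hC1 : ∀ i k, k < k₀ + i → ιV (y i) k = 0 := by
    intro i k hk
    rw [hy i]
    unfold SpSet
    split
    · next hmem =>
      have hk' : k < k₀ := by
        rcases hmem with h | h
        · exact h
        · omega
      have hcle : ∀ inst : DecidablePred (· ∈ N i), @Nat.count (· ∈ N i) inst k ≤ k :=
        fun inst => @Nat.count_le _ inst k
      exact hk₀min _ (lt_of_le_of_lt (hcle _) hk')
    · rfl
  have hC2 : ∀ i, ιV (y i) (k₀ + i) = v k₀ := by
    intro i
    rw [hy i]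
    unfold SpSet
    rw [if_pos (show k₀ + i ∈ N i from Or.inr le_rfl)]
    have key : ∀ inst : DecidablePred (· ∈ N i), @Nat.count (· ∈ N i) inst (k₀ + i) = k₀ := by
      intro inst
      rw [Nat.count_eq_card_filter_range]
      have hfil : @Finset.filter ℕ (· ∈ N i) inst (Finset.range (k₀ + i)) = Finset.range k₀ := by
        ext m
        simp only [Finset.mem_filter, Finset.mem_range, hN, Set.mem_setOf_eq]
        omega
      rw [hfil, Finset.card_range]
    rw [key]
  have hli : LinearIndependent 𝕜 y := by
    rw [linearIndependent_iff']
    intro s g hsum i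
    induction i using Nat.strong_induction_on with
    | _ i IH =>
      intro hi
      have h0 : (ιV (∑ j ∈ s, g j • y j)) (k₀ + i) = 0 := by rw [hsum, map_zero]; rfl
      rw [map_sum] at h0
      rw [Finset.sum_apply] at h0
      have hsingle : ∑ j ∈ s, (ιV (g j • y j)) (k₀ + i) = g i • v k₀ := by
        rw [Finset.sum_eq_single_of_mem i hi]
        · rw [map_smul, Pi.smul_apply, hC2 i]
        · intro j hj hji
          rw [map_smul, Pi.smul_apply]
          rcases lt_or_gt_of_ne hji with hlt | hgt
          · rw [IH j hlt hj, zero_smul]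
          · rw [hC1 j (k₀ + i) (by omega), smul_zero]
      rw [hsingle] at h0
      by_contra hgi
      refine hk₀ ?_
      have := congrArg (fun w => (g i)⁻¹ • w) h0
      simpa [smul_smul, inv_mul_cancel₀ hgi] using this
  intro hfin
  have hrank := hli.cardinal_lift_le_rank
  have hlt : Module.rank 𝕜 V < Cardinal.aleph0 := by
    haveI : FiniteDimensional 𝕜 V := hfin
    exact Module.rank_lt_aleph0 𝕜 V
  rw [Cardinal.mk_nat] at hrank
  have h1 : Cardinal.aleph0 ≤ Cardinal.lift.{0} (Module.rank 𝕜 V) := by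
    simpa using hrank
  rw [Cardinal.aleph0_le_lift] at h1
  exact absurd hlt (not_lt.mpr h1)

/-- Let `E` be a Banach space with `dim E > 1` and let `V` be a Banach space of
`W`-valued sequences (realized via an injective linear map `ιV`) that is spreading-closed
with norm non-increasing under spreadings. Then the set of non-injective bounded linear
operators from `E` to `V` is pointwise spaceable in `L(E; V)`: every non-injective
`T ∈ L(E; V)` lies in a closed infinite-dimensional subspace of `L(E; V)` consisting
entirely of non-injective operators. -/
theorem noninjective_operators_pointwise_spaceable
    {𝕜 E W V : Type*} [RCLike 𝕜]
    [NormedAddCommGroup E] [NormedSpace 𝕜 E] [CompleteSpace E]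
    (hE : 1 < Module.rank 𝕜 E)
    [AddCommGroup W] [Module 𝕜 W]
    [NormedAddCommGroup V] [NormedSpace 𝕜 V] [CompleteSpace V] [Nontrivial V]
    (ιV : V →ₗ[𝕜] (ℕ → W)) (hιV : Function.Injective ιV)
    (hspread : ∀ (x : V) (N : Set ℕ), N.Infinite →
      ∃ y : V, ιV y = SpSet (ιV x) N ∧ ‖y‖ ≤ ‖x‖) :
    ∀ T : E →L[𝕜] V, ¬ Function.Injective T →
      ∃ X : Submodule 𝕜 (E →L[𝕜] V), IsClosed (X : Set (E →L[𝕜] V)) ∧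
        ¬ Module.Finite 𝕜 X ∧ T ∈ X ∧ ∀ S ∈ X, ¬ Function.Injective S := by
  intro T hT
  obtain ⟨x₁, x₂, hTeq, hne⟩ := Function.not_injective_iff.mp hT
  set a : E := x₁ - x₂ with ha
  have ha0 : a ≠ 0 := sub_ne_zero.mpr hne
  have hTa : T a = 0 := by rw [ha, map_sub, hTeq, sub_self]
  -- find `b` outside the span of `a`
  obtain ⟨b, hb⟩ : ∃ b, b ∉ Submodule.span 𝕜 ({a} : Set E) := by
    by_contra h
    push_neg at h
    have htop : Submodule.span 𝕜 ({a} : Set E) = ⊤ := Submodule.eq_top_iff'.mpr h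
    have h1 : Module.rank 𝕜 ↥(Submodule.span 𝕜 ({a} : Set E)) ≤ 1 := by
      simpa using rank_span_le (R := 𝕜) ({a} : Set E)
    rw [htop, rank_top] at h1
    exact hE.not_ge h1
  -- a continuous functional `f` with `f a = 0`, `f b = 1`
  have hlib : LinearIndependent 𝕜 ![b, a] := by
    rw [linearIndependent_fin2]
    refine ⟨by simpa using ha0, fun c hc => hb ?_⟩
    simp only [Matrix.cons_val_one, Matrix.head_cons, Matrix.cons_val_zero] at hc
    exact Submodule.mem_span_singleton.mpr ⟨c, hc⟩
  set p : Submodule 𝕜 E := Submodule.span 𝕜 (Set.range ![b, a]) with hp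
  haveI : FiniteDimensional 𝕜 p := FiniteDimensional.span_of_finite 𝕜 (Set.finite_range _)
  set B : Module.Basis (Fin 2) 𝕜 p := Module.Basis.span hlib with hB
  set ℓ : p →ₗ[𝕜] 𝕜 := B.constr 𝕜 ![(1 : 𝕜), 0] with hℓ
  obtain ⟨f, hf, -⟩ := exists_extension_norm_eq p (LinearMap.toContinuousLinearMap ℓ)
  have hfa : f a = 0 := by
    have hcoe : ((B 1 : p) : E) = a := by
      rw [hB, Module.Basis.span_apply]; simp
    have := hf (B 1)
    rw [hcoe] at this
    rw [this]
    simp [hℓ, Module.Basis.constr_basis]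
  have hfb : f b = 1 := by
    have hcoe : ((B 0 : p) : E) = b := by
      rw [hB, Module.Basis.span_apply]; simp
    have := hf (B 0)
    rw [hcoe] at this
    rw [this]
    simp [hℓ, Module.Basis.constr_basis]
  -- the subspace of operators vanishing at `a`
  refine ⟨LinearMap.ker (ContinuousLinearMap.apply 𝕜 V a : (E →L[𝕜] V) →ₗ[𝕜] V), ?_, ?_, ?_, ?_⟩
  · exact ContinuousLinearMap.isClosed_ker _
  · intro hfin
    haveI : FiniteDimensional 𝕜 (LinearMap.ker (ContinuousLinearMap.apply 𝕜 V a : (E →L[𝕜] V) →ₗ[𝕜] V)) := hfin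
    have hmem : ∀ w : V, f.smulRight w ∈ LinearMap.ker (ContinuousLinearMap.apply 𝕜 V a : (E →L[𝕜] V) →ₗ[𝕜] V) := by
      intro w
      rw [LinearMap.mem_ker]
      show (f.smulRight w) a = 0
      rw [ContinuousLinearMap.smulRight_apply, hfa, zero_smul]
    set Φ : V →ₗ[𝕜] (LinearMap.ker (ContinuousLinearMap.apply 𝕜 V a : (E →L[𝕜] V) →ₗ[𝕜] V)) :=
      LinearMap.codRestrict _ ((ContinuousLinearMap.smulRightL 𝕜 E V f).toLinearMap) hmem
      with hΦ
    have hΦinj : Function.Injective Φ := by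
      intro w₁ w₂ h
      have h2 : f.smulRight w₁ = f.smulRight w₂ := congrArg Subtype.val h
      have h3 := congrArg (fun S : E →L[𝕜] V => S b) h2
      simpa [ContinuousLinearMap.smulRight_apply, hfb] using h3
    have : FiniteDimensional 𝕜 V := FiniteDimensional.of_injective Φ hΦinj
    exact spreadingClosed_not_finite ιV hιV hspread this
  · rw [LinearMap.mem_ker]
    show T a = 0
    exact hTa
  · intro S hS hSinj
    rw [LinearMap.mem_ker] at hS
    have hSa : S a = 0 := hS
    exact ha0 (hSinj (by rw [hSa, map_zero]))
end
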